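/- arXiv:1611.02316 — 6 statements merged into one kernel-verified Lean document; each statement's English description precedes it below -/
import Mathlib

section
/- Among all orthonormal families {ψ_1,…,ψ_ℓ} in ℝ^n, the first ℓ left singular vectors of the snapshot matrix Y minimize the functional Σ_{j=1}^m ‖y_j − Σ_{i=1}^ℓ ⟨y_j, ψ_i⟩ ψ_i‖², i.e. for every orthonormal family {φ_1,…,φ_ℓ}, Σ_j ‖y_j − Σ_i ⟨y_j, φ_i⟩ φ_i‖² ≥ Σ_{i=ℓ+1}^r σ_i². -/
/-!
Write `Y = Ψ Σ Vᵀ` and let `C = Φᵀ Ψ` be the matrix of inner products `⟨φ_k, ψ_i⟩`. Since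
`Y - ΦΦᵀY = (1 - ΦΦᵀ) Y` and `1 - ΦΦᵀ` is an orthogonal projection, the projection error is
`trace (Σ (1 - CᵀC) Σ) = ∑ i, σ_i² w_i` with `w_i = 1 - ∑ k, ⟨φ_k, ψ_i⟩²`. Bessel's inequality in
both directions, i.e. positive semidefiniteness of `1 - CᵀC` and of `1 - CCᵀ`, gives
`0 ≤ w_i ≤ 1` and `∑ i, w_i ≥ r - ℓ`. Under these constraints `∑ i, σ_i² w_i`, with `σ_i²`
decreasing, is smallest when all the weight sits on the last `r - ℓ` indices.
-/

open Matrix Finset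

namespace Matrix

variable {R : Type*} {k l m n : Type*} [Fintype k] [Fintype l] [Fintype m] [Fintype n]

theorem conjTranspose_one_sub_mul_one_sub [Ring R] [StarRing R] [DecidableEq k] [DecidableEq n]
    {U : Matrix k n R} (hU : U * Uᴴ = 1) : (1 - Uᴴ * U)ᴴ * (1 - Uᴴ * U) = 1 - Uᴴ * U := by
  have hP : Uᴴ * U * (Uᴴ * U) = Uᴴ * U := by
    rw [Matrix.mul_assoc, ← Matrix.mul_assoc U, hU, Matrix.one_mul]
  simp only [conjTranspose_sub, conjTranspose_one, conjTranspose_mul, conjTranspose_conjTranspose,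
    Matrix.sub_mul, Matrix.mul_sub, Matrix.one_mul, Matrix.mul_one, hP]
  abel

theorem posSemidef_one_sub_mul_conjTranspose_of_mul_conjTranspose_eq_one [CommRing R]
    [PartialOrder R] [StarRing R] [StarOrderedRing R] [DecidableEq k] [DecidableEq l]
    [DecidableEq n]
    {U : Matrix k n R} {W : Matrix l n R} (hU : U * Uᴴ = 1) (hW : W * Wᴴ = 1) :
    (1 - (U * Wᴴ) * (U * Wᴴ)ᴴ).PosSemidef := by
  have h : ((1 - Wᴴ * W) * Uᴴ)ᴴ * ((1 - Wᴴ * W) * Uᴴ) = 1 - (U * Wᴴ) * (U * Wᴴ)ᴴ :=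
    calc ((1 - Wᴴ * W) * Uᴴ)ᴴ * ((1 - Wᴴ * W) * Uᴴ)
        = U * ((1 - Wᴴ * W)ᴴ * (1 - Wᴴ * W)) * Uᴴ := by
          simp only [conjTranspose_mul, conjTranspose_conjTranspose, Matrix.mul_assoc]
      _ = 1 - (U * Wᴴ) * (U * Wᴴ)ᴴ := by
          simp only [conjTranspose_one_sub_mul_one_sub hW, conjTranspose_mul,
            conjTranspose_conjTranspose, Matrix.mul_sub, Matrix.sub_mul, Matrix.mul_one, hU,
            Matrix.mul_assoc]
  rw [← h]
  exact posSemidef_conjTranspose_mul_self _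

theorem sub_le_trace_one_sub_conjTranspose_mul_self [CommRing R] [PartialOrder R] [StarRing R]
    [StarOrderedRing R] [DecidableEq k] [DecidableEq l] {C : Matrix k l R}
    (hC : (1 - C * Cᴴ).PosSemidef) :
    (Fintype.card l : R) - Fintype.card k ≤ (1 - Cᴴ * C).trace := by
  have h := hC.trace_nonneg
  rw [trace_sub, trace_one, trace_mul_comm] at h
  rw [trace_sub, trace_one]
  exact sub_le_sub_left (sub_nonneg.1 h) _

theorem diag_one_sub_conjTranspose_mul_self_le_one [CommRing R] [PartialOrder R] [StarRing R]
    [StarOrderedRing R] [DecidableEq l] (C : Matrix k l R) (i : l) :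
    (1 - Cᴴ * C : Matrix l l R) i i ≤ 1 := by
  rw [sub_apply, one_apply_eq]
  exact sub_le_self 1 (posSemidef_conjTranspose_mul_self C).diag_nonneg

theorem trace_conjTranspose_mul_self_sub_proj_eq [CommRing R] [StarRing R] {r s : Type*}
    [Fintype r] [Fintype s] [DecidableEq k] [DecidableEq n] [DecidableEq r] [DecidableEq s]
    {U : Matrix k n R} {Y : Matrix n m R} {Ψ : Matrix n r R} {D : Matrix r s R}
    {V : Matrix m s R} (hU : U * Uᴴ = 1) (hY : Y = Ψ * D * Vᴴ) (hΨ : Ψᴴ * Ψ = 1)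
    (hV : Vᴴ * V = 1) :
    ((Y - Uᴴ * U * Y)ᴴ * (Y - Uᴴ * U * Y)).trace
      = (Dᴴ * (1 - (U * Ψ)ᴴ * (U * Ψ)) * D).trace := by
  have hres : Y - Uᴴ * U * Y = (1 - Uᴴ * U) * Y := by rw [Matrix.sub_mul, Matrix.one_mul]
  rw [hres, conjTranspose_mul, Matrix.mul_assoc, ← Matrix.mul_assoc _ _ Y,
    conjTranspose_one_sub_mul_one_sub hU, hY]
  have hmid : Ψᴴ * (1 - Uᴴ * U) * Ψ = 1 - (U * Ψ)ᴴ * (U * Ψ) := by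
    simp only [Matrix.mul_sub, Matrix.sub_mul, Matrix.mul_one, hΨ, conjTranspose_mul,
      Matrix.mul_assoc]
  calc ((Ψ * D * Vᴴ)ᴴ * ((1 - Uᴴ * U) * (Ψ * D * Vᴴ))).trace
      = (V * (Dᴴ * (Ψᴴ * (1 - Uᴴ * U) * Ψ) * D * Vᴴ)).trace := by
        simp only [conjTranspose_mul, conjTranspose_conjTranspose, Matrix.mul_assoc]
    _ = (Dᴴ * (1 - (U * Ψ)ᴴ * (U * Ψ)) * D).trace := by
        rw [trace_mul_comm, Matrix.mul_assoc _ Vᴴ, hV, Matrix.mul_one, hmid]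

theorem trace_diagonal_mul_mul_diagonal [CommRing R] [DecidableEq n] (d : n → R)
    (M : Matrix n n R) : (diagonal d * M * diagonal d).trace = ∑ i, d i ^ 2 * M i i := by
  simp only [trace, diag, mul_diagonal, diagonal_mul]
  exact sum_congr rfl fun i _ => by ring

theorem trace_conjTranspose_mul_self_eq_sum_sq (A : Matrix m n ℝ) :
    (Aᴴ * A).trace = ∑ j, ∑ i, A i j ^ 2 := by
  simp [trace, mul_apply, sq]

end Matrix

theorem Finset.sum_le_sum_mul_of_threshold {ι : Type*} [Fintype ι] (S : Finset ι)
    {s w : ι → ℝ} {c : ℝ} (hc : 0 ≤ c) (hS : ∀ i ∈ S, s i ≤ c) (hSc : ∀ i ∉ S, c ≤ s i)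
    (hw0 : ∀ i, 0 ≤ w i) (hw1 : ∀ i, w i ≤ 1) (hcard : (#S : ℝ) ≤ ∑ i, w i) :
    ∑ i ∈ S, s i ≤ ∑ i, s i * w i := by
  classical
  have hin : ∑ i ∈ S, s i * (1 - w i) ≤ c * ∑ i ∈ S, (1 - w i) := by
    rw [mul_sum]
    exact sum_le_sum fun i hi => mul_le_mul_of_nonneg_right (hS i hi) (by linarith [hw1 i])
  have hout : c * ∑ i ∈ Sᶜ, w i ≤ ∑ i ∈ Sᶜ, s i * w i := by
    rw [mul_sum]
    exact sum_le_sum fun i hi => mul_le_mul_of_nonneg_right (hSc i (mem_compl.1 hi)) (hw0 i)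
  have hsplit : ∑ i ∈ S, s i = ∑ i ∈ S, s i * w i + ∑ i ∈ S, s i * (1 - w i) := by
    rw [← sum_add_distrib]
    exact sum_congr rfl fun i _ => by ring
  have hbal : ∑ i ∈ S, (1 - w i) ≤ ∑ i ∈ Sᶜ, w i := by
    rw [← sum_add_sum_compl S w] at hcard
    rw [sum_sub_distrib, sum_const, nsmul_one]
    linarith
  rw [← sum_add_sum_compl S, hsplit]
  nlinarith [mul_le_mul_of_nonneg_left hbal hc]

theorem Fin.sum_filter_le_le_sum_mul_of_antitone {r ℓ : ℕ} {s w : Fin r → ℝ} (hs : Antitone s)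
    (hs0 : ∀ i, 0 ≤ s i) (hw0 : ∀ i, 0 ≤ w i) (hw1 : ∀ i, w i ≤ 1)
    (hw : (r : ℝ) - ℓ ≤ ∑ i, w i) :
    ∑ k ∈ univ.filter (fun k : Fin r => ℓ ≤ (k : ℕ)), s k ≤ ∑ i, s i * w i := by
  rcases lt_or_ge ℓ r with hlt | hle
  · have hS : univ.filter (fun k : Fin r => ℓ ≤ (k : ℕ)) = Ici ⟨ℓ, hlt⟩ := by
      ext k
      simp [Fin.le_def]
    rw [hS]
    refine sum_le_sum_mul_of_threshold _ (hs0 _) (fun i hi => hs (mem_Ici.1 hi))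
      (fun i hi => hs (not_le.1 (mem_Ici.not.1 hi)).le) hw0 hw1 ?_
    rwa [Fin.card_Ici, Nat.cast_sub hlt.le]
  · rw [filter_eq_empty_iff.2 fun k _ => not_le.2 (k.isLt.trans_le hle), sum_empty]
    exact sum_nonneg fun i _ => mul_nonneg (hs0 i) (hw0 i)

theorem sum_sum_sq_sub_proj_eq_trace {n m ℓ : ℕ} (Y : Matrix (Fin n) (Fin m) ℝ)
    (φ : Fin ℓ → Fin n → ℝ) :
    ∑ j : Fin m, ∑ i : Fin n,
        (Y i j - ∑ k : Fin ℓ, (∑ i' : Fin n, Y i' j * φ k i') * φ k i) ^ 2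
      = ((Y - (of φ)ᴴ * of φ * Y)ᴴ * (Y - (of φ)ᴴ * of φ * Y)).trace := by
  have hproj : ∀ i j, ((of φ)ᴴ * of φ * Y) i j = ∑ k, (∑ i', Y i' j * φ k i') * φ k i := by
    intro i j
    simp only [mul_apply, conjTranspose_apply, of_apply, star_trivial, sum_mul]
    rw [sum_comm]
    exact sum_congr rfl fun _ _ => sum_congr rfl fun _ _ => by ring
  simp only [trace_conjTranspose_mul_self_eq_sum_sq, Matrix.sub_apply, hproj]

theorem pod_optimality_general {n m r : ℕ} (Y : Matrix (Fin n) (Fin m) ℝ)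
    (Ψ : Matrix (Fin n) (Fin r) ℝ) (σ : Fin r → ℝ) (V : Matrix (Fin m) (Fin r) ℝ)
    (hsvd : Y = Ψ * Matrix.diagonal σ * Vᵀ)
    (hΨ : Ψᵀ * Ψ = 1) (hV : Vᵀ * V = 1)
    (hσpos : ∀ i, 0 < σ i) (hσmono : ∀ i j : Fin r, i ≤ j → σ j ≤ σ i)
    (ℓ : ℕ)
    (φ : Fin ℓ → Fin n → ℝ)
    (hortho : ∀ i j : Fin ℓ, (∑ a : Fin n, φ i a * φ j a) = if i = j then 1 else 0) :
    ∑ j : Fin m, ∑ i : Fin n,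
        (Y i j - ∑ k : Fin ℓ, (∑ i' : Fin n, Y i' j * φ k i') * φ k i) ^ 2
      ≥ ∑ k ∈ Finset.univ.filter (fun k : Fin r => ℓ ≤ (k : ℕ)), σ k ^ 2 := by
  simp only [← conjTranspose_eq_transpose_of_trivial] at hsvd hΨ hV
  rw [ge_iff_le, sum_sum_sq_sub_proj_eq_trace]
  set U : Matrix (Fin ℓ) (Fin n) ℝ := of φ
  have hU : U * Uᴴ = 1 := by
    ext i j
    simpa [U, mul_apply, one_apply] using hortho i j
  set C := U * Ψ
  have hcols : (1 - Cᴴ * C).PosSemidef := by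
    simpa [C] using posSemidef_one_sub_mul_conjTranspose_of_mul_conjTranspose_eq_one
      (U := Ψᴴ) (by simpa using hΨ) hU
  have hrows : (1 - C * Cᴴ).PosSemidef :=
    posSemidef_one_sub_mul_conjTranspose_of_mul_conjTranspose_eq_one (W := Ψᴴ) hU
      (by simpa using hΨ)
  have htrace := sub_le_trace_one_sub_conjTranspose_mul_self hrows
  rw [Fintype.card_fin, Fintype.card_fin] at htrace
  rw [trace_conjTranspose_mul_self_sub_proj_eq hU hsvd hΨ hV, diagonal_conjTranspose,
    star_trivial, trace_diagonal_mul_mul_diagonal]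
  exact Fin.sum_filter_le_le_sum_mul_of_antitone
    (fun i j hij => pow_le_pow_left₀ (hσpos j).le (hσmono i j hij) 2) (fun _ => sq_nonneg _)
    (fun _ => hcols.diag_nonneg) (diag_one_sub_conjTranspose_mul_self_le_one C) htrace

/-- POD optimality: every orthonormal family of ℓ vectors gives projection
error at least the sum of the squares of the neglected singular values. -/
theorem pod_optimality {n m r : ℕ} (Y : Matrix (Fin n) (Fin m) ℝ)
    (Ψ : Matrix (Fin n) (Fin r) ℝ) (σ : Fin r → ℝ) (V : Matrix (Fin m) (Fin r) ℝ)
    (hrank : Y.rank = r)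
    (hsvd : Y = Ψ * Matrix.diagonal σ * Vᵀ)
    (hΨ : Ψᵀ * Ψ = 1) (hV : Vᵀ * V = 1)
    (hσpos : ∀ i, 0 < σ i) (hσmono : ∀ i j : Fin r, i ≤ j → σ j ≤ σ i)
    (ℓ : ℕ) (hℓ : ℓ ≤ r)
    (φ : Fin ℓ → Fin n → ℝ)
    (hortho : ∀ i j : Fin ℓ, (∑ a : Fin n, φ i a * φ j a) = if i = j then 1 else 0) :
    ∑ j : Fin m, ∑ i : Fin n,
        (Y i j - ∑ k : Fin ℓ, (∑ i' : Fin n, Y i' j * φ k i') * φ k i) ^ 2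
      ≥ ∑ k ∈ Finset.univ.filter (fun k : Fin r => ℓ ≤ (k : ℕ)), σ k ^ 2 :=
  pod_optimality_general Y Ψ σ V hsvd hΨ hV hσpos hσmono ℓ φ hortho
end

section
/- Let Y ∈ ℝ^{n×m}, Q ∈ ℝ^{n×ℓ} with orthonormal columns, and set B = Q^T Y with reduced SVD B = Û Σ V^T. Define U = Q Û. Then U has orthonormal columns and U Σ V^T = Q Q^T Y; in particular if Y = Q Q^T Y (the range of Y is contained in the range of Q), then U Σ V^T is a singular value decomposition of Y. -/
open Matrix

/-- Correctness of the randomized SVD: with B = QᵀY = Û Σ Vᵀ and U = QÛ, the matrix U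
has orthonormal columns and U Σ Vᵀ = Q Qᵀ Y; if moreover Y = Q Qᵀ Y then
U Σ Vᵀ is an SVD of Y. -/
theorem randomized_svd_correct {n m ℓ : ℕ}
    (Y : Matrix (Fin n) (Fin m) ℝ) (Q : Matrix (Fin n) (Fin ℓ) ℝ)
    (hQ : Qᵀ * Q = 1)
    (Uhat : Matrix (Fin ℓ) (Fin ℓ) ℝ) (σ : Fin ℓ → ℝ) (V : Matrix (Fin m) (Fin ℓ) ℝ)
    (hUhat : Uhatᵀ * Uhat = 1) (hUhat' : Uhat * Uhatᵀ = 1)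
    (hσ : ∀ i, 0 ≤ σ i) (hV : Vᵀ * V = 1)
    (hB : Qᵀ * Y = Uhat * Matrix.diagonal σ * Vᵀ)
    (U : Matrix (Fin n) (Fin ℓ) ℝ) (hUdef : U = Q * Uhat) :
    Uᵀ * U = 1 ∧ U * Matrix.diagonal σ * Vᵀ = Q * Qᵀ * Y ∧
      (Y = Q * Qᵀ * Y → Y = U * Matrix.diagonal σ * Vᵀ) := by
  subst hUdef
  have h1 : (Q * Uhat)ᵀ * (Q * Uhat) = 1 := by
    rw [transpose_mul]
    rw [Matrix.mul_assoc, ← Matrix.mul_assoc Qᵀ, hQ, Matrix.one_mul, hUhat]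
  have h2 : Q * Uhat * Matrix.diagonal σ * Vᵀ = Q * Qᵀ * Y := by
    rw [Matrix.mul_assoc Q Qᵀ Y, hB, ← Matrix.mul_assoc, ← Matrix.mul_assoc]
  exact ⟨h1, h2, fun h => by rw [h, ← h2]⟩
end

section
/- Let A ∈ ℝ^{n×m} have exact rank ℓ and let Ω ∈ ℝ^{m×ℓ} be such that the ℓ×ℓ matrix V^T Ω is invertible, where V ∈ ℝ^{m×ℓ} contains the right singular vectors of A corresponding to its nonzero singular values. Then the columns of Y = A Ω span the column space of A, i.e. range(Y) = range(A). -/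
open Matrix

/-- If A has exact rank ℓ with SVD A = U Σ Vᵀ and VᵀΩ is invertible, then the
columns of Y = AΩ span the column space of A: range(AΩ) = range(A). -/
theorem randomized_sampling_range {n m ℓ : ℕ}
    (A : Matrix (Fin n) (Fin m) ℝ)
    (U : Matrix (Fin n) (Fin ℓ) ℝ) (σ : Fin ℓ → ℝ) (V : Matrix (Fin m) (Fin ℓ) ℝ)
    (hU : Uᵀ * U = 1) (hV : Vᵀ * V = 1) (hσ : ∀ i, σ i ≠ 0)
    (hsvd : A = U * Matrix.diagonal σ * Vᵀ)
    (hrank : A.rank = ℓ)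
    (Ω : Matrix (Fin m) (Fin ℓ) ℝ) (hΩ : IsUnit (Vᵀ * Ω)) :
    LinearMap.range (A * Ω).mulVecLin = LinearMap.range A.mulVecLin := by
  have hinv : (Vᵀ * Ω) * (Vᵀ * Ω)⁻¹ = 1 :=
    Matrix.mul_nonsing_inv _ ((Matrix.isUnit_iff_isUnit_det _).mp hΩ)
  have hA : (A * Ω) * ((Vᵀ * Ω)⁻¹ * Vᵀ) = A := by
    calc (A * Ω) * ((Vᵀ * Ω)⁻¹ * Vᵀ)
        = U * Matrix.diagonal σ * ((Vᵀ * Ω) * (Vᵀ * Ω)⁻¹) * Vᵀ := by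
          rw [hsvd]; simp only [Matrix.mul_assoc]
      _ = A := by rw [hinv, Matrix.mul_one, hsvd]
  apply le_antisymm
  · rw [Matrix.mulVecLin_mul]
    exact LinearMap.range_comp_le_range _ _
  · conv_lhs => rw [← hA]
    rw [Matrix.mulVecLin_mul]
    exact LinearMap.range_comp_le_range _ _
end

section
/- Let Y, Y' ∈ ℝ^{n×m} and suppose Y has reduced SVD Y = U Σ V^T with Σ invertible. Define A = Y' V Σ^{-1} U^T (the exact DMD operator) and à = U^T A U = U^T Y' V Σ^{-1}. If w is an eigenvector of à with eigenvalue λ ≠ 0, then ψ = Y' V Σ^{-1} w satisfies A ψ = λ ψ, i.e. the exact DMD mode ψ is an eigenvector of A with the same eigenvalue. -/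
open Matrix

/-- Correctness of the exact DMD mode formula: if w is an eigenvector of
Ã = Uᵀ Y' V Σ⁻¹ with eigenvalue λ ≠ 0, then ψ = Y' V Σ⁻¹ w is an eigenvector
of A = Y' V Σ⁻¹ Uᵀ with the same eigenvalue. -/
theorem exact_dmd_modes {n m r : ℕ}
    (Y Y' : Matrix (Fin n) (Fin m) ℝ)
    (U : Matrix (Fin n) (Fin r) ℝ) (σ : Fin r → ℝ) (V : Matrix (Fin m) (Fin r) ℝ)
    (hU : Uᵀ * U = 1) (hV : Vᵀ * V = 1) (hσ : ∀ i, σ i ≠ 0)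
    (hsvd : Y = U * Matrix.diagonal σ * Vᵀ)
    (A : Matrix (Fin n) (Fin n) ℝ)
    (hA : A = Y' * V * (Matrix.diagonal σ)⁻¹ * Uᵀ)
    (Atil : Matrix (Fin r) (Fin r) ℝ)
    (hAtil : Atil = Uᵀ * Y' * V * (Matrix.diagonal σ)⁻¹)
    (w : Fin r → ℝ) (lam : ℝ) (hlam : lam ≠ 0)
    (hw : Atil.mulVec w = lam • w)
    (ψ : Fin n → ℝ) (hψ : ψ = (Y' * V * (Matrix.diagonal σ)⁻¹).mulVec w) :
    A.mulVec ψ = lam • ψ := by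
  subst hA hAtil hψ
  rw [← Matrix.mulVec_mulVec]
  have : Uᵀ.mulVec ((Y' * V * (Matrix.diagonal σ)⁻¹).mulVec w)
      = (Uᵀ * Y' * V * (Matrix.diagonal σ)⁻¹).mulVec w := by
    rw [Matrix.mulVec_mulVec]; simp only [Matrix.mul_assoc]
  rw [this, hw, Matrix.mulVec_smul]
end

section
/- With A = Y' V Σ^{-1} U^T and à = U^T Y' V Σ^{-1} as in exact DMD, the DMD mode ψ = Y' V Σ^{-1} w (for an eigenvector w of à with eigenvalue λ ≠ 0) is nonzero, and hence λ is genuinely an eigenvalue of the n×n operator A. -/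
open Matrix

/-- The exact DMD mode ψ = Y' V Σ⁻¹ w associated with an eigenvector w of Ã with
nonzero eigenvalue λ is nonzero, hence λ is genuinely an eigenvalue of the n×n
DMD operator A. -/
theorem exact_dmd_mode_nonzero {n m r : ℕ}
    (Y Y' : Matrix (Fin n) (Fin m) ℝ)
    (U : Matrix (Fin n) (Fin r) ℝ) (σ : Fin r → ℝ) (V : Matrix (Fin m) (Fin r) ℝ)
    (hU : Uᵀ * U = 1) (hV : Vᵀ * V = 1) (hσ : ∀ i, σ i ≠ 0)
    (hsvd : Y = U * Matrix.diagonal σ * Vᵀ)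
    (A : Matrix (Fin n) (Fin n) ℝ)
    (hA : A = Y' * V * (Matrix.diagonal σ)⁻¹ * Uᵀ)
    (Atil : Matrix (Fin r) (Fin r) ℝ)
    (hAtil : Atil = Uᵀ * Y' * V * (Matrix.diagonal σ)⁻¹)
    (w : Fin r → ℝ) (hw0 : w ≠ 0) (lam : ℝ) (hlam : lam ≠ 0)
    (hw : Atil.mulVec w = lam • w)
    (ψ : Fin n → ℝ) (hψ : ψ = (Y' * V * (Matrix.diagonal σ)⁻¹).mulVec w) :
    ψ ≠ 0 ∧ Module.End.HasEigenvalue A.mulVecLin lam := by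
  set B := Y' * V * (Matrix.diagonal σ)⁻¹ with hB
  have hUB : Uᵀ * B = Atil := by
    rw [hAtil, hB]; simp [Matrix.mul_assoc]
  have hUψ : Uᵀ.mulVec ψ = lam • w := by
    rw [hψ, Matrix.mulVec_mulVec, hUB, hw]
  have hψ0 : ψ ≠ 0 := by
    intro h
    apply hw0
    have h0 : lam • w = 0 := by
      rw [← hUψ, h, Matrix.mulVec_zero]
    simpa [hlam] using smul_eq_zero.mp h0
  refine ⟨hψ0, ?_⟩
  have hAψ : A.mulVec ψ = lam • ψ := by
    rw [hA, hψ, Matrix.mulVec_mulVec]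
    have : Y' * V * (Matrix.diagonal σ)⁻¹ * Uᵀ * (Y' * V * (Matrix.diagonal σ)⁻¹)
        = B * Atil := by rw [← hUB, hB]; simp [Matrix.mul_assoc]
    rw [this, ← Matrix.mulVec_mulVec, hw, Matrix.mulVec_smul]
  exact Module.End.hasEigenvalue_of_hasEigenvector ⟨by
    rw [Module.End.mem_eigenspace_iff]; simpa using hAψ, hψ0⟩
end

section
/- Let A ∈ ℝ^{n×m} and let Q ∈ ℝ^{n×ℓ} have orthonormal columns. If the truncated rank-k SVD of B = Q^T A is B_k, then ‖A − Q B_k‖₂ ≤ ‖A − Q Q^T A‖₂ + σ_{k+1}(A), where σ_{k+1}(A) is the (k+1)-st singular value of A. -/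
open Matrix

/-- Operator 2-norm (spectral norm) of a matrix. -/
noncomputable def opNorm2 {n m : ℕ} (A : Matrix (Fin n) (Fin m) ℝ) : ℝ :=
  ‖LinearMap.toContinuousLinearMap (Matrix.toEuclideanLin A)‖

/-- The (k+1)-st singular value of A, characterized (Eckart–Young) as the distance
in spectral norm from A to the set of matrices of rank at most k. -/
noncomputable def singVal {n m : ℕ} (A : Matrix (Fin n) (Fin m) ℝ) (k : ℕ) : ℝ :=
  sInf ((fun Z : Matrix (Fin n) (Fin m) ℝ => opNorm2 (A - Z)) '' {Z | Z.rank ≤ k})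

/-!
Write `A - Q Bₖ = (A - Q Qᵀ A) + Q (Qᵀ A - Bₖ)`. Both `Q` and `Qᵀ` are contractions, so the
second term has norm at most `‖Qᵀ A - Bₖ‖`. For any `W` of rank at most `k`, `Qᵀ W` also has rank
at most `k`, so optimality of `Bₖ` gives `‖Qᵀ A - Bₖ‖ ≤ ‖Qᵀ (A - W)‖ ≤ ‖A - W‖`; the infimum over
`W` is `σₖ₊₁(A)`.
-/

open scoped Matrix.Norms.L2Operator

theorem opNorm2_eq_l2_opNorm {n m : ℕ} (A : Matrix (Fin n) (Fin m) ℝ) : opNorm2 A = ‖A‖ := rfl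

theorem Matrix.l2_opNorm_le_one_of_conjTranspose_mul_self_eq_one {𝕜 m n : Type*} [RCLike 𝕜]
    [Fintype m] [Fintype n] [DecidableEq n] {Q : Matrix m n 𝕜} (hQ : Qᴴ * Q = 1) : ‖Q‖ ≤ 1 := by
  have hQ_sq : ‖Q‖ * ‖Q‖ = ‖(1 : Matrix n n 𝕜)‖ := by
    rw [← l2_opNorm_conjTranspose_mul_self, hQ]
  -- `‖1‖` is `0` when `n` is empty; the C⋆-identity still gives `‖1‖ = ‖1‖²`.
  have h_one : ‖(1 : Matrix n n 𝕜)‖ = ‖(1 : Matrix n n 𝕜)‖ * ‖(1 : Matrix n n 𝕜)‖ := by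
    rw [← l2_opNorm_conjTranspose_mul_self, conjTranspose_one, one_mul]
  have h_one_le : ‖(1 : Matrix n n 𝕜)‖ ≤ 1 := by nlinarith [norm_nonneg (1 : Matrix n n 𝕜)]
  nlinarith [norm_nonneg Q]

theorem opNorm2_mul_sub_le_singVal {n m ℓ k : ℕ} {P : Matrix (Fin ℓ) (Fin n) ℝ}
    (hP : ‖P‖ ≤ 1) (A : Matrix (Fin n) (Fin m) ℝ) {B : Matrix (Fin ℓ) (Fin m) ℝ}
    (hB : ∀ Z : Matrix (Fin ℓ) (Fin m) ℝ, Z.rank ≤ k → opNorm2 (P * A - B) ≤ opNorm2 (P * A - Z)) :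
    opNorm2 (P * A - B) ≤ singVal A k := by
  refine le_csInf ⟨_, 0, by simp [rank_zero], rfl⟩ ?_
  rintro _ ⟨W, hW, rfl⟩
  calc opNorm2 (P * A - B) ≤ ‖P * (A - W)‖ := by
        rw [Matrix.mul_sub]
        exact hB (P * W) ((rank_mul_le_right P W).trans hW)
    _ ≤ ‖P‖ * ‖A - W‖ := l2_opNorm_mul P (A - W)
    _ ≤ ‖A - W‖ := mul_le_of_le_one_left (norm_nonneg _) hP

theorem randomized_svd_truncation_bound_general {n m ℓ k : ℕ}
    (A : Matrix (Fin n) (Fin m) ℝ) (Q : Matrix (Fin n) (Fin ℓ) ℝ)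
    (hQ : Qᵀ * Q = 1)
    (Bk : Matrix (Fin ℓ) (Fin m) ℝ)
    (hBkbest : ∀ Z : Matrix (Fin ℓ) (Fin m) ℝ, Z.rank ≤ k →
      opNorm2 (Qᵀ * A - Bk) ≤ opNorm2 (Qᵀ * A - Z)) :
    opNorm2 (A - Q * Bk) ≤ opNorm2 (A - Q * Qᵀ * A) + singVal A k := by
  have hQ_le : ‖Q‖ ≤ 1 := l2_opNorm_le_one_of_conjTranspose_mul_self_eq_one <| by
    rwa [conjTranspose_eq_transpose_of_trivial]
  have hQt_le : ‖Qᵀ‖ ≤ 1 := by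
    rwa [← conjTranspose_eq_transpose_of_trivial, l2_opNorm_conjTranspose]
  have hsplit : A - Q * Bk = (A - Q * Qᵀ * A) + Q * (Qᵀ * A - Bk) := by
    rw [Matrix.mul_sub, ← Matrix.mul_assoc]
    abel
  calc opNorm2 (A - Q * Bk) ≤ ‖A - Q * Qᵀ * A‖ + ‖Q‖ * ‖Qᵀ * A - Bk‖ := by
        rw [opNorm2_eq_l2_opNorm, hsplit]
        exact norm_add_le_of_le le_rfl (l2_opNorm_mul _ _)
    _ ≤ ‖A - Q * Qᵀ * A‖ + ‖Qᵀ * A - Bk‖ := by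
        gcongr
        exact mul_le_of_le_one_left (norm_nonneg _) hQ_le
    _ ≤ opNorm2 (A - Q * Qᵀ * A) + singVal A k :=
        add_le_add le_rfl (opNorm2_mul_sub_le_singVal hQt_le A hBkbest)

/-- Error bound for the truncated randomized SVD:
‖A − Q B_k‖₂ ≤ ‖A − Q Qᵀ A‖₂ + σ_{k+1}(A). -/
theorem randomized_svd_truncation_bound {n m ℓ k : ℕ} (hk : k ≤ ℓ)
    (A : Matrix (Fin n) (Fin m) ℝ) (Q : Matrix (Fin n) (Fin ℓ) ℝ)
    (hQ : Qᵀ * Q = 1)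
    (Bk : Matrix (Fin ℓ) (Fin m) ℝ) (hBkrank : Bk.rank ≤ k)
    (hBkbest : ∀ Z : Matrix (Fin ℓ) (Fin m) ℝ, Z.rank ≤ k →
      opNorm2 (Qᵀ * A - Bk) ≤ opNorm2 (Qᵀ * A - Z)) :
    opNorm2 (A - Q * Bk) ≤ opNorm2 (A - Q * Qᵀ * A) + singVal A k :=
  randomized_svd_truncation_bound_general A Q hQ Bk hBkbest
end
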